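/- arXiv:quant-ph/0611156 — 5 statements merged into one kernel-verified Lean document; each statement's English description precedes it below -/
import Mathlib

section
/- For any finite graph G with a bubbling B given by an ordering b_1,...,b_n of its vertices, the assignment sending the i-th node of a path of length n-1 to the set of vertices incident to an edge crossing the i-th bubble boundary (i.e., vertices incident to an edge with exactly one endpoint in {b_1,...,b_i}) yields a valid path decomposition of G. -/
/-- Number of edges of `G` with exactly one endpoint in `S`
(counted as ordered pairs with the first coordinate in `S`). -/
noncomputable def cutSize {V : Type*} (G : SimpleGraph V) (S : Set V) : ℕ :=
  {p : V × V | G.Adj p.1 p.2 ∧ p.1 ∈ S ∧ p.2 ∉ S}.ncard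

/-- The prefix `{b 0, …, b i}` of an ordering of the vertices. -/
def prefixSet {V : Type*} [Fintype V] (b : Fin (Fintype.card V) ≃ V)
    (i : Fin (Fintype.card V)) : Set V :=
  {v | ∃ j, j ≤ i ∧ b j = v}

/-- The width of a bubbling (vertex ordering): max size of a prefix cut. -/
noncomputable def ordWidth {V : Type*} [Fintype V] (G : SimpleGraph V)
    (b : Fin (Fintype.card V) ≃ V) : ℕ :=
  Finset.univ.sup fun i => cutSize G (prefixSet b i)

/-- The bubble width of a finite graph. -/
noncomputable def bubbleWidth {V : Type*} [Fintype V] (G : SimpleGraph V) : ℕ :=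
  sInf (Set.range (ordWidth G))


/-- The bag associated to the `i`-th step of a bubbling: all vertices incident to an
edge crossing the `i`-th bubble boundary. -/
def bubbleBag {V : Type*} [Fintype V] (G : SimpleGraph V)
    (b : Fin (Fintype.card V) ≃ V) (i : Fin (Fintype.card V)) : Set V :=
  {x | ∃ u w, G.Adj u w ∧ u ∈ prefixSet b i ∧ w ∉ prefixSet b i ∧ (x = u ∨ x = w)}

/-- the bags coming from the boundaries of a bubbling form a valid
path decomposition (indexed by the path with `Fintype.card V` nodes): every edge is
contained in some bag, and for each vertex the set of bags containing it is an interval. -/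
theorem bubbling_gives_path_decomposition {V : Type*} [Fintype V] [DecidableEq V]
    (G : SimpleGraph V) (b : Fin (Fintype.card V) ≃ V) :
    (∀ ⦃u v : V⦄, G.Adj u v → ∃ i, u ∈ bubbleBag G b i ∧ v ∈ bubbleBag G b i) ∧
    (∀ (v : V) (i j k : Fin (Fintype.card V)), i ≤ j → j ≤ k →
      v ∈ bubbleBag G b i → v ∈ bubbleBag G b k → v ∈ bubbleBag G b j) := by
  have hmem : ∀ (i : Fin (Fintype.card V)) (v : V),
      v ∈ prefixSet b i ↔ b.symm v ≤ i := by
    intro i v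
    constructor
    · rintro ⟨j, hj, rfl⟩; simpa using hj
    · intro h; exact ⟨b.symm v, h, b.apply_symm_apply v⟩
  constructor
  · intro u v hadj
    have hne : b.symm u ≠ b.symm v := fun h => hadj.ne (b.symm.injective h)
    rcases hne.lt_or_gt with h | h
    · refine ⟨b.symm u, ?_, ?_⟩
      · exact ⟨u, v, hadj, (hmem _ _).2 le_rfl,
          fun hv => absurd ((hmem _ _).1 hv) (not_le.2 h), Or.inl rfl⟩
      · exact ⟨u, v, hadj, (hmem _ _).2 le_rfl,
          fun hv => absurd ((hmem _ _).1 hv) (not_le.2 h), Or.inr rfl⟩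
    · refine ⟨b.symm v, ?_, ?_⟩
      · exact ⟨v, u, hadj.symm, (hmem _ _).2 le_rfl,
          fun hu => absurd ((hmem _ _).1 hu) (not_le.2 h), Or.inr rfl⟩
      · exact ⟨v, u, hadj.symm, (hmem _ _).2 le_rfl,
          fun hu => absurd ((hmem _ _).1 hu) (not_le.2 h), Or.inl rfl⟩
  · rintro v i j k hij hjk ⟨u₁, w₁, h₁, hu₁, hw₁, hv₁⟩ ⟨u₂, w₂, h₂, hu₂, hw₂, hv₂⟩
    by_cases hvj : b.symm v ≤ j
    · -- use the edge from bag k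
      have hv2 : v = u₂ := by
        rcases hv₂ with rfl | rfl
        · rfl
        · exact absurd ((hvj.trans hjk)) (fun h => hw₂ ((hmem _ _).2 h))
      refine ⟨u₂, w₂, h₂, (hmem _ _).2 (hv2 ▸ hvj), ?_, Or.inl hv2⟩
      intro hw
      exact hw₂ ((hmem _ _).2 (((hmem _ _).1 hw).trans hjk))
    · -- use the edge from bag i
      have hv1 : v = w₁ := by
        rcases hv₁ with rfl | rfl
        · exact absurd (((hmem _ _).1 hu₁).trans hij) hvj
        · rfl
      refine ⟨u₁, w₁, h₁, (hmem _ _).2 (((hmem _ _).1 hu₁).trans hij), ?_, Or.inr hv1⟩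
      intro hw
      exact hvj (hv1 ▸ (hmem _ _).1 hw)
end

section
/- For any finite graph G in which every vertex has degree at most d, the bubble width of G is at most d times the path width of G, i.e., BW(G) ≤ d·PW(G). -/
structure PathDecomp {V : Type*} (G : SimpleGraph V) where
  m : ℕ
  bag : Fin m → Set V
  cover : ∀ ⦃u v⦄, G.Adj u v → ∃ i, u ∈ bag i ∧ v ∈ bag i
  interval : ∀ v (i j k : Fin m), i ≤ j → j ≤ k → v ∈ bag i → v ∈ bag k → v ∈ bag j

noncomputable def PathDecomp.width {V : Type*} {G : SimpleGraph V} (D : PathDecomp G) : ℕ :=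
  Finset.univ.sup fun i => (D.bag i).ncard

noncomputable def pathWidth {V : Type*} (G : SimpleGraph V) : ℕ :=
  sInf (Set.range (PathDecomp.width (G := G)))

lemma SimpleGraph.ncard_setOf_fst_mem_adj_le {V : Type*} (G : SimpleGraph V) {d : ℕ}
    (hdeg : ∀ v, (G.neighborSet v).ncard ≤ d) {B : Set V} (hB : B.Finite) :
    {p : V × V | p.1 ∈ B ∧ G.Adj p.1 p.2}.ncard ≤ d * B.ncard := by
  have hunion : {p : V × V | p.1 ∈ B ∧ G.Adj p.1 p.2} =
      ⋃ u ∈ hB.toFinset, {u} ×ˢ G.neighborSet u := by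
    ext ⟨u, v⟩
    simp
  calc _ ≤ ∑ u ∈ hB.toFinset, ({u} ×ˢ G.neighborSet u).ncard :=
        hunion ▸ hB.toFinset.set_ncard_biUnion_le _
    _ ≤ ∑ _u ∈ hB.toFinset, d := Finset.sum_le_sum fun u _ => by
        simpa [Set.ncard_prod] using hdeg u
    _ = d * B.ncard := by
        rw [Finset.sum_const, smul_eq_mul, mul_comm, Set.ncard_eq_toFinset_card B hB]

lemma cutSize_le_of_boundary_subset {V : Type*} [Finite V] (G : SimpleGraph V) {d : ℕ}
    (hdeg : ∀ v, (G.neighborSet v).ncard ≤ d) {S B : Set V}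
    (hSB : ∀ u ∈ S, ∀ v ∉ S, G.Adj u v → u ∈ B) :
    cutSize G S ≤ d * B.ncard := by
  refine (Set.ncard_le_ncard ?_ (Set.toFinite _)).trans
    (G.ncard_setOf_fst_mem_adj_le hdeg B.toFinite)
  rintro ⟨u, v⟩ ⟨hadj, hu, hv⟩
  exact ⟨hSB u hu v hv hadj, hadj⟩

section Ordering

variable {V : Type*} [Fintype V]

lemma exists_equiv_monotone_comp {α : Type*} [LinearOrder α] (f : V → α) :
    ∃ b : Fin (Fintype.card V) ≃ V, Monotone (f ∘ b) :=
  let e := (Fintype.equivFin V).symm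
  ⟨(Tuple.sort (f ∘ e)).trans e, Tuple.monotone_sort (f ∘ e)⟩

variable {α : Type*} [Preorder α] {f : V → α} {b : Fin (Fintype.card V) ≃ V}

lemma le_of_mem_prefixSet (hb : Monotone (f ∘ b)) {i : Fin (Fintype.card V)} {u : V}
    (hu : u ∈ prefixSet b i) : f u ≤ f (b i) := by
  obtain ⟨j, hji, rfl⟩ := hu
  exact hb hji

lemma le_of_notMem_prefixSet (hb : Monotone (f ∘ b)) {i : Fin (Fintype.card V)} {v : V}
    (hv : v ∉ prefixSet b i) : f (b i) ≤ f v := by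
  have hi : i ≤ b.symm v := le_of_not_ge fun h => hv ⟨b.symm v, h, b.apply_symm_apply v⟩
  simpa using hb hi

end Ordering

namespace PathDecomp

variable {V : Type*} {G : SimpleGraph V} (D : PathDecomp G)

/-- The index of the first bag containing `v` (`0` if there is none). -/
noncomputable def firstBag (v : V) : ℕ :=
  sInf {j | ∃ h : j < D.m, v ∈ D.bag ⟨j, h⟩}

lemma firstBag_le {v : V} {i : Fin D.m} (hv : v ∈ D.bag i) : D.firstBag v ≤ i :=
  Nat.sInf_le ⟨i.2, hv⟩

lemma mem_bag_of_firstBag_le {v : V} {i j : Fin D.m} (hv : v ∈ D.bag j)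
    (hvi : D.firstBag v ≤ i) (hij : i ≤ j) : v ∈ D.bag i := by
  obtain ⟨h, hfirst⟩ := Nat.sInf_mem (s := {j | ∃ h : j < D.m, v ∈ D.bag ⟨j, h⟩}) ⟨j, j.2, hv⟩
  exact D.interval v ⟨_, h⟩ i j hvi hij hfirst hv

lemma exists_mem_bag_of_adj {u v : V} (huv : G.Adj u v) {t : ℕ} (hu : D.firstBag u ≤ t)
    (hv : t ≤ D.firstBag v) : ∃ h : t < D.m, u ∈ D.bag ⟨t, h⟩ := by
  obtain ⟨j, huj, hvj⟩ := D.cover huv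
  have htj : t ≤ j := hv.trans (D.firstBag_le hvj)
  exact ⟨htj.trans_lt j.2, D.mem_bag_of_firstBag_le huj hu htj⟩

lemma ncard_bag_le_width (i : Fin D.m) : (D.bag i).ncard ≤ D.width :=
  Finset.le_sup (f := fun i => (D.bag i).ncard) (Finset.mem_univ i)

lemma cutSize_le_mul_width [Finite V] {d : ℕ} (hdeg : ∀ v, (G.neighborSet v).ncard ≤ d)
    {S : Set V} (t : ℕ) (hS : ∀ u ∈ S, D.firstBag u ≤ t) (hSc : ∀ v ∉ S, t ≤ D.firstBag v) :
    cutSize G S ≤ d * D.width := by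
  by_cases ht : t < D.m
  · calc cutSize G S ≤ d * (D.bag ⟨t, ht⟩).ncard := cutSize_le_of_boundary_subset G hdeg
          fun u hu v hv huv => (D.exists_mem_bag_of_adj huv (hS u hu) (hSc v hv)).2
      _ ≤ d * D.width := Nat.mul_le_mul_left d (D.ncard_bag_le_width _)
  · calc cutSize G S ≤ d * (∅ : Set V).ncard := cutSize_le_of_boundary_subset G hdeg
          fun u hu v hv huv => absurd (D.exists_mem_bag_of_adj huv (hS u hu) (hSc v hv)).1 ht
      _ ≤ d * D.width := by simp

lemma bubbleWidth_le_mul_width [Fintype V] {d : ℕ} (hdeg : ∀ v, (G.neighborSet v).ncard ≤ d) :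
    bubbleWidth G ≤ d * D.width := by
  obtain ⟨b, hb⟩ := exists_equiv_monotone_comp D.firstBag
  calc bubbleWidth G ≤ ordWidth G b := Nat.sInf_le ⟨b, rfl⟩
    _ ≤ d * D.width := Finset.sup_le fun i _ =>
      D.cutSize_le_mul_width hdeg (D.firstBag (b i)) (fun _ => le_of_mem_prefixSet hb)
        fun _ => le_of_notMem_prefixSet hb

lemma exists_width_eq_pathWidth (G : SimpleGraph V) : ∃ D : PathDecomp G, D.width = pathWidth G :=
  Nat.sInf_mem ⟨PathDecomp.width (G := G)
    ⟨1, fun _ => Set.univ, fun _ _ _ => ⟨0, trivial, trivial⟩, fun _ _ _ _ _ _ _ _ => trivial⟩,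
    Set.mem_range_self _⟩

end PathDecomp

theorem bubbleWidth_le_degree_mul_pathWidth_general {V : Type*} [Fintype V]
    (G : SimpleGraph V) (d : ℕ) (hdeg : ∀ v : V, (G.neighborSet v).ncard ≤ d) :
    bubbleWidth G ≤ d * pathWidth G := by
  obtain ⟨D, hD⟩ := PathDecomp.exists_width_eq_pathWidth G
  exact hD ▸ D.bubbleWidth_le_mul_width hdeg

/-- if every vertex of `G` has degree at most `d`, then the bubble width
of `G` is at most `d` times its path width. -/
theorem bubbleWidth_le_degree_mul_pathWidth {V : Type*} [Fintype V] [DecidableEq V]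
    (G : SimpleGraph V) (d : ℕ) (hdeg : ∀ v : V, (G.neighborSet v).ncard ≤ d) :
    bubbleWidth G ≤ d * pathWidth G :=
  bubbleWidth_le_degree_mul_pathWidth_general G d hdeg
end

section
/- Let G be a finite graph and let t_1,...,t_m be a path decomposition of G. Define an ordering of the vertices of G by listing first the vertices of t_1 (in any order), then the vertices of t_2 not already listed, and so on. Then for every index i and every edge (a,b) with a among the first i listed vertices and b not among them, at least one endpoint of (a,b) lies in the bag t_{j_i}, where j_i is the least index j such that the i-th listed vertex belongs to t_j. -/
theorem PathDecomp.mem_bag_of_adj_of_le {V : Type*} {G : SimpleGraph V} (D : PathDecomp G)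
    {u v : V} {i j : Fin D.m} (huv : G.Adj u v) (hu : u ∈ D.bag i) (hij : i ≤ j)
    (hv : ∀ k, v ∈ D.bag k → j ≤ k) : u ∈ D.bag j := by
  obtain ⟨k, huk, hvk⟩ := D.cover huv
  exact D.interval u i j k hij (hv k hvk) hu huk

theorem edge_endpoint_in_first_bag_general {V : Type*} [Fintype V]
    (G : SimpleGraph V) (D : PathDecomp G)
    (f : V → Fin D.m)
    (hf : ∀ v : V, v ∈ D.bag (f v) ∧ ∀ j : Fin D.m, v ∈ D.bag j → f v ≤ j)
    (b : Fin (Fintype.card V) ≃ V)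
    (hb : ∀ p q : Fin (Fintype.card V), p ≤ q → f (b p) ≤ f (b q)) :
    ∀ (i p q : Fin (Fintype.card V)), p ≤ i → i < q → G.Adj (b p) (b q) →
      b p ∈ D.bag (f (b i)) ∨ b q ∈ D.bag (f (b i)) := by
  intro i p q hpi hiq hadj
  exact .inl <| D.mem_bag_of_adj_of_le hadj (hf (b p)).1 (hb p i hpi)
    fun k hk => (hb i q hiq.le).trans ((hf (b q)).2 k hk)

/-- Let `t_1, …, t_m` be a path decomposition of `G`, and list the vertices
bag by bag (first the vertices of `t_1`, then the new vertices of `t_2`, etc.).  Such an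
ordering `b` is exactly one that is monotone with respect to the index `f v` of the first
bag containing `v`.  Then for every index `i` and every edge `(a, c)` with `a` among the
first `i` listed vertices and `c` not among them, at least one endpoint of the edge lies
in the bag `t_{f (b i)}`. -/
theorem edge_endpoint_in_first_bag {V : Type*} [Fintype V] [DecidableEq V]
    (G : SimpleGraph V) (D : PathDecomp G)
    (f : V → Fin D.m)
    (hf : ∀ v : V, v ∈ D.bag (f v) ∧ ∀ j : Fin D.m, v ∈ D.bag j → f v ≤ j)
    (b : Fin (Fintype.card V) ≃ V)
    (hb : ∀ p q : Fin (Fintype.card V), p ≤ q → f (b p) ≤ f (b q)) :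
    ∀ (i p q : Fin (Fintype.card V)), p ≤ i → i < q → G.Adj (b p) (b q) →
      b p ∈ D.bag (f (b i)) ∨ b q ∈ D.bag (f (b i)) :=
  edge_endpoint_in_first_bag_general G D f hf b hb
end

section
/- Let Q be a unitary on (ℂ²)^{⊗n} and define Q' = Q† P_0 Q where P_0 projects the answer qubit onto |0⟩. If Q is implemented by a circuit whose graph has bubble width w, then Q' is implemented by a circuit (the circuit for Q, followed by the projection gate, followed by the adjoint circuit reflected) whose graph has bubble width at most 2w + 1. -/
/-- The circuit graph of `Q' = Q† P₀ Q`: two mirror copies of the circuit graph of `Q`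
(the circuit and its reflected adjoint), with each output vertex `v ∈ O` joined to its
mirror image by a wire; for the answer wire this connecting edge is the projection gate. -/
def mirrorCircuit {V : Type*} (G : SimpleGraph V) (O : Set V) : SimpleGraph (V ⊕ V) :=
  SimpleGraph.fromRel (fun a c =>
    match a, c with
    | Sum.inl u, Sum.inl v => G.Adj u v
    | Sum.inr u, Sum.inr v => G.Adj u v
    | Sum.inl u, Sum.inr v => u = v ∧ u ∈ O
    | Sum.inr _, Sum.inl _ => False)

/-! Order the doubled graph by interleaving an optimal ordering `b` of `G` with its mirror image:
`inl (b k)` at position `2k` and `inr (b k)` at position `2k + 1`. Every prefix of this ordering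
is a prefix `A` of `b` in the first copy together with a prefix `B ⊆ A` in the mirror copy, where
`A \ B` has at most one vertex. An edge leaving the prefix is a cut edge of `A` in the first copy,
a cut edge of `B` in the mirror copy, or the wire joining some `v ∈ A \ B` to its mirror, so there
are at most `w + w + 1` of them. -/

section MirrorCircuit

variable {V : Type*}

lemma cutSize_empty (G : SimpleGraph V) : cutSize G ∅ = 0 := by
  simp [cutSize]

lemma cutSize_univ (G : SimpleGraph V) : cutSize G Set.univ = 0 := by
  simp [cutSize]

section Ordering

variable [Fintype V]

lemma prefixSet_eq (b : Fin (Fintype.card V) ≃ V) (i : Fin (Fintype.card V)) :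
    prefixSet b i = {v | b.symm v ≤ i} := by
  ext v
  exact ⟨fun ⟨j, hj, hv⟩ => hv ▸ by simpa using hj, fun h => ⟨b.symm v, h, by simp⟩⟩

lemma cutSize_prefixSet_le_ordWidth (G : SimpleGraph V) (b : Fin (Fintype.card V) ≃ V)
    (i : Fin (Fintype.card V)) : cutSize G (prefixSet b i) ≤ ordWidth G b :=
  Finset.le_sup (f := fun i => cutSize G (prefixSet b i)) (Finset.mem_univ i)

lemma cutSize_setOf_lt_le_ordWidth (G : SimpleGraph V) (b : Fin (Fintype.card V) ≃ V)
    (k : ℕ) : cutSize G {v | (b.symm v : ℕ) < k} ≤ ordWidth G b := by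
  rcases k with _ | k
  · simp [cutSize_empty]
  by_cases hk : k < Fintype.card V
  · convert cutSize_prefixSet_le_ordWidth G b ⟨k, hk⟩ using 2
    ext v
    simp [prefixSet_eq, Fin.le_def]
  · convert Nat.zero_le _
    convert cutSize_univ G
    ext v
    simpa using (b.symm v).isLt.trans_le (by omega : Fintype.card V ≤ k + 1)

lemma exists_ordWidth_eq_bubbleWidth (G : SimpleGraph V) :
    ∃ b, ordWidth G b = bubbleWidth G :=
  Nat.sInf_mem (Set.range_nonempty_iff_nonempty.2 ⟨(Fintype.equivFin V).symm⟩)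

lemma bubbleWidth_le_ordWidth (G : SimpleGraph V) (b : Fin (Fintype.card V) ≃ V) :
    bubbleWidth G ≤ ordWidth G b :=
  Nat.sInf_le ⟨b, rfl⟩

lemma card_sum_self_eq_mul_two : Fintype.card (V ⊕ V) = Fintype.card V * 2 := by
  rw [Fintype.card_sum, mul_two]

def interleave (b : Fin (Fintype.card V) ≃ V) : Fin (Fintype.card (V ⊕ V)) ≃ V ⊕ V :=
  (finCongr card_sum_self_eq_mul_two).trans <| finProdFinEquiv.symm.trans <|
    (b.prodCongr finTwoEquiv).trans <| (Equiv.prodComm _ _).trans (Equiv.boolProdEquivSum V)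

lemma interleave_symm_inl (b : Fin (Fintype.card V) ≃ V) (v : V) :
    ((interleave b).symm (Sum.inl v) : ℕ) = 2 * b.symm v := by
  simp [interleave, finTwoEquiv, finProdFinEquiv]

lemma interleave_symm_inr (b : Fin (Fintype.card V) ≃ V) (v : V) :
    ((interleave b).symm (Sum.inr v) : ℕ) = 2 * b.symm v + 1 := by
  simp [interleave, finTwoEquiv, finProdFinEquiv, add_comm]

lemma prefixSet_interleave (b : Fin (Fintype.card V) ≃ V) (i : Fin (Fintype.card (V ⊕ V))) :
    prefixSet (interleave b) i =
      Sum.inl '' {v | (b.symm v : ℕ) < (i : ℕ) / 2 + 1} ∪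
        Sum.inr '' {v | (b.symm v : ℕ) < ((i : ℕ) + 1) / 2} := by
  rw [prefixSet_eq]
  ext (v | v) <;>
    simp only [Set.mem_ofPred_eq, Fin.le_def, interleave_symm_inl, interleave_symm_inr,
      Set.mem_union, Set.mem_image, Sum.inl.injEq, Sum.inr.injEq, reduceCtorEq, and_false,
      exists_false, or_false, false_or, exists_eq_right] <;>
    omega

end Ordering

section Mirror

variable (G : SimpleGraph V) (O : Set V) {u v : V}

@[simp] lemma mirrorCircuit_adj_inl_inl :
    (mirrorCircuit G O).Adj (Sum.inl u) (Sum.inl v) ↔ G.Adj u v := by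
  simp only [mirrorCircuit, SimpleGraph.fromRel_adj, ne_eq, Sum.inl.injEq]
  exact ⟨fun ⟨_, h⟩ => h.elim id .symm, fun h => ⟨h.ne, .inl h⟩⟩

@[simp] lemma mirrorCircuit_adj_inr_inr :
    (mirrorCircuit G O).Adj (Sum.inr u) (Sum.inr v) ↔ G.Adj u v := by
  simp only [mirrorCircuit, SimpleGraph.fromRel_adj, ne_eq, Sum.inr.injEq]
  exact ⟨fun ⟨_, h⟩ => h.elim id .symm, fun h => ⟨h.ne, .inl h⟩⟩

@[simp] lemma mirrorCircuit_adj_inl_inr :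
    (mirrorCircuit G O).Adj (Sum.inl u) (Sum.inr v) ↔ u = v ∧ u ∈ O := by
  simp [mirrorCircuit]

@[simp] lemma mirrorCircuit_adj_inr_inl :
    (mirrorCircuit G O).Adj (Sum.inr u) (Sum.inl v) ↔ u = v ∧ u ∈ O := by
  simp only [mirrorCircuit, SimpleGraph.fromRel_adj, ne_eq, reduceCtorEq, not_false_eq_true,
    false_or, true_and]
  exact ⟨fun ⟨h, hu⟩ => ⟨h.symm, h ▸ hu⟩, fun ⟨h, hu⟩ => ⟨h.symm, h ▸ hu⟩⟩

end Mirror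

lemma cutSize_mirrorCircuit_le [Finite V] (G : SimpleGraph V) (O : Set V) {A B : Set V}
    (hBA : B ⊆ A) :
    cutSize (mirrorCircuit G O) (Sum.inl '' A ∪ Sum.inr '' B) ≤
      cutSize G A + cutSize G B + (A \ B).ncard := by
  set cutEdges := fun (H : SimpleGraph V) (S : Set V) =>
    {p : V × V | H.Adj p.1 p.2 ∧ p.1 ∈ S ∧ p.2 ∉ S}
  have hsub : {p | (mirrorCircuit G O).Adj p.1 p.2 ∧ p.1 ∈ Sum.inl '' A ∪ Sum.inr '' B ∧
      p.2 ∉ Sum.inl '' A ∪ Sum.inr '' B} ⊆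
      Prod.map Sum.inl Sum.inl '' cutEdges G A ∪ Prod.map Sum.inr Sum.inr '' cutEdges G B ∪
        (fun v => (Sum.inl v, Sum.inr v)) '' (A \ B) := by
    rintro ⟨u | u, v | v⟩ ⟨hadj, hu, hv⟩ <;>
      simp only [mirrorCircuit_adj_inl_inl, mirrorCircuit_adj_inl_inr, mirrorCircuit_adj_inr_inl,
        mirrorCircuit_adj_inr_inr, Set.mem_union, Set.mem_image, Sum.inl.injEq, Sum.inr.injEq,
        exists_eq_right, reduceCtorEq, and_false, exists_false, or_false, false_or] at hadj hu hv
    · exact .inl (.inl ⟨(u, v), ⟨hadj, hu, hv⟩, rfl⟩)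
    · obtain ⟨rfl, -⟩ := hadj
      exact .inr ⟨u, ⟨hu, hv⟩, rfl⟩
    · obtain ⟨rfl, -⟩ := hadj
      exact (hv (hBA hu)).elim
    · exact .inl (.inr ⟨(u, v), ⟨hadj, hu, hv⟩, rfl⟩)
  calc cutSize (mirrorCircuit G O) _
      ≤ (Prod.map Sum.inl Sum.inl '' cutEdges G A ∪ Prod.map Sum.inr Sum.inr '' cutEdges G B ∪
          (fun v => (Sum.inl v, Sum.inr v)) '' (A \ B)).ncard :=
        Set.ncard_le_ncard hsub (Set.toFinite _)
    _ ≤ (Prod.map Sum.inl Sum.inl '' cutEdges G A).ncard +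
          (Prod.map Sum.inr Sum.inr '' cutEdges G B).ncard +
          ((fun v => (Sum.inl v, Sum.inr v)) '' (A \ B)).ncard :=
        (Set.ncard_union_le _ _).trans (add_le_add_left (Set.ncard_union_le _ _) _)
    _ ≤ cutSize G A + cutSize G B + (A \ B).ncard := by
        gcongr <;> exact Set.ncard_image_le (Set.toFinite _)

lemma ordWidth_mirrorCircuit_interleave_le [Fintype V] (G : SimpleGraph V) (O : Set V)
    (b : Fin (Fintype.card V) ≃ V) :
    ordWidth (mirrorCircuit G O) (interleave b) ≤ 2 * ordWidth G b + 1 := by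
  refine Finset.sup_le fun i _ => ?_
  set A := {v | (b.symm v : ℕ) < (i : ℕ) / 2 + 1}
  set B := {v | (b.symm v : ℕ) < ((i : ℕ) + 1) / 2}
  have hBA : B ⊆ A := fun v (hv : (b.symm v : ℕ) < _) => show (b.symm v : ℕ) < _ by omega
  -- `A \ B` is empty for odd `i` and consists of `b (i / 2)` for even `i`.
  have hAB : (A \ B).ncard ≤ 1 := by
    refine (Set.ncard_le_one (Set.toFinite _)).2 fun v ⟨hvA, hvB⟩ w ⟨hwA, hwB⟩ => ?_
    simp only [A, B, Set.mem_ofPred_eq, not_lt] at hvA hvB hwA hwB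
    exact b.symm.injective (Fin.ext (by omega))
  calc cutSize (mirrorCircuit G O) (prefixSet (interleave b) i)
      ≤ cutSize G A + cutSize G B + (A \ B).ncard := by
        rw [prefixSet_interleave]
        exact cutSize_mirrorCircuit_le G O hBA
    _ ≤ ordWidth G b + ordWidth G b + 1 := by
        gcongr <;> exact cutSize_setOf_lt_le_ordWidth G b _
    _ = 2 * ordWidth G b + 1 := by ring

end MirrorCircuit

theorem bubbleWidth_mirrorCircuit_general {V : Type*} [Fintype V]
    (G : SimpleGraph V) (O : Set V) :
    bubbleWidth (mirrorCircuit G O) ≤ 2 * bubbleWidth G + 1 := by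
  obtain ⟨b, hb⟩ := exists_ordWidth_eq_bubbleWidth G
  calc bubbleWidth (mirrorCircuit G O) ≤ ordWidth (mirrorCircuit G O) (interleave b) :=
        bubbleWidth_le_ordWidth _ _
    _ ≤ 2 * bubbleWidth G + 1 := hb ▸ ordWidth_mirrorCircuit_interleave_le G O b

/-- if the circuit of `Q` has bubble width `w`, then the circuit for
`Q' = Q† P₀ Q` (the circuit of `Q`, the projection on the answer qubit, and the reflected
adjoint circuit) has bubble width at most `2w + 1`. -/
theorem bubbleWidth_mirrorCircuit {V : Type*} [Fintype V] [DecidableEq V]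
    (G : SimpleGraph V) (O : Set V) :
    bubbleWidth (mirrorCircuit G O) ≤ 2 * bubbleWidth G + 1 :=
  bubbleWidth_mirrorCircuit_general G O
end

section
/- For every n ≥ 1 and every basis state |x⟩ on n qubits, the fidelity between the exact QFT output |ψ_x⟩ = ⊗_{j=0}^{n−1} |μ_{0.x_j...x_0}⟩ and the truncated state |ψ̃_x⟩ = ⊗_{j=0}^{n−1} |μ_{θ̃_j}⟩, where θ̃_j keeps only the top k = 2⌈log₂(n/ε)⌉ + O(1) binary digits of 0.x_j...x_0, satisfies ‖|ψ_x⟩ − |ψ̃_x⟩‖ ≤ ε. -/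
/-! Replacing the angles of `⊗_j |μ_{θ_j}⟩` one at a time by those of `θ'` changes a single
tensor factor per step; as the other factors are unit vectors, each step moves the state by
`‖|μ_{θ_j}⟩ − |μ_{θ'_j}⟩‖ ≤ π√2 |θ_j − θ'_j|`. Summing over the `n` qubits gives
`n π√2 2^{-k}`, which is at most `ε` as soon as `2^k ≥ 8 · 2^{⌈log₂(n/ε)⌉} ≥ 8n/ε`. -/

open scoped Real

/-- The qubit state `|μ_θ⟩ = (|0⟩ + e^{2πiθ}|1⟩)/√2`. -/
noncomputable def muState (θ : ℝ) : Bool → ℂ := fun b =>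
  if b then Complex.exp (2 * π * Complex.I * θ) / Real.sqrt 2 else 1 / Real.sqrt 2

/-- The Hilbert norm on a tensor power of `ℂ²` realized as functions to `ℂ`. -/
noncomputable def hnorm {ι : Type*} [Fintype ι] (f : ι → ℂ) : ℝ :=
  Real.sqrt (∑ y : ι, Complex.normSq (f y))

/-- The product state `⊗_j |μ_{θ_j}⟩`. -/
noncomputable def muProd {n : ℕ} (θ : Fin n → ℝ) : (Fin n → Bool) → ℂ :=
  fun y => ∏ j, muState (θ j) (y j)

/-- The numerical value `∑ x_j 2^j` of a bit string. -/
def bitsVal {n : ℕ} (x : Fin n → Bool) : ℕ :=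
  ∑ j : Fin n, if x j then 2 ^ (j : ℕ) else 0

/-- The QFT angle `0.x_{n-j-1}…x_0` of the `j`-th output qubit. -/
noncomputable def qftAngle {n : ℕ} (x : Fin n → Bool) (j : Fin n) : ℝ :=
  ((bitsVal x % 2 ^ (n - (j : ℕ)) : ℕ) : ℝ) / (2 : ℝ) ^ (n - (j : ℕ))

open Finset Function

lemma prod_sub_prod_update {ι R : Type*} [Fintype ι] [DecidableEq ι] [CommRing R]
    (f : ι → R) (j : ι) (b : R) :
    ∏ i, f i - ∏ i, update f j b i = ∏ i, update f j (f j - b) i := by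
  rw [prod_update_of_mem (mem_univ j), prod_update_of_mem (mem_univ j),
    prod_eq_mul_prod_sdiff_singleton_of_mem (mem_univ j)]
  ring

lemma hnorm_eq_norm_toLp {ι : Type*} [Fintype ι] (f : ι → ℂ) :
    hnorm f = ‖WithLp.toLp 2 f‖ := by
  simp [hnorm, EuclideanSpace.norm_eq, Complex.normSq_eq_norm_sq]

lemma hnorm_sub_le_hnorm_sub_add_hnorm_sub {ι : Type*} [Fintype ι] (f g h : ι → ℂ) :
    hnorm (f - h) ≤ hnorm (f - g) + hnorm (g - h) := by
  simpa only [hnorm_eq_norm_toLp, WithLp.toLp_sub] using norm_sub_le_norm_sub_add_norm_sub _ _ _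

lemma hnorm_prod {ι κ : Type*} [Fintype ι] [DecidableEq ι] [Fintype κ] (g : ι → κ → ℂ) :
    hnorm (fun y : ι → κ => ∏ i, g i (y i)) = ∏ i, hnorm (g i) := by
  simp only [hnorm]
  rw [← Real.sqrt_prod _ fun i _ => sum_nonneg fun b _ => Complex.normSq_nonneg (g i b),
    Fintype.prod_sum]
  simp only [map_prod]

lemma hnorm_prod_update {ι κ : Type*} [Fintype ι] [DecidableEq ι] [Fintype κ]
    (g : ι → κ → ℂ) (hg : ∀ i, hnorm (g i) = 1) (j : ι) (d : κ → ℂ) :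
    hnorm (fun y : ι → κ => ∏ i, update g j d i (y i)) = hnorm d := by
  rw [hnorm_prod]
  simp only [apply_update (fun _ => hnorm), hg, prod_update_of_mem (mem_univ j), prod_const_one,
    mul_one]

lemma norm_exp_two_pi_I_mul (θ : ℝ) : ‖Complex.exp (2 * π * Complex.I * θ)‖ = 1 := by
  rw [Complex.norm_exp]; simp

lemma norm_exp_two_pi_I_mul_sub_le (θ θ' : ℝ) :
    ‖Complex.exp (2 * π * Complex.I * θ) - Complex.exp (2 * π * Complex.I * θ')‖ ≤
      2 * π * |θ - θ'| := by
  have hfactor : Complex.exp (2 * π * Complex.I * θ) - Complex.exp (2 * π * Complex.I * θ') =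
      Complex.exp (2 * π * Complex.I * θ') *
        (Complex.exp (Complex.I * (2 * π * (θ - θ') : ℝ)) - 1) := by
    rw [mul_sub, ← Complex.exp_add]; push_cast; ring_nf
  rw [hfactor, norm_mul, norm_exp_two_pi_I_mul, one_mul]
  calc _ ≤ ‖2 * π * (θ - θ')‖ := Real.norm_exp_I_mul_ofReal_sub_one_le
    _ = 2 * π * |θ - θ'| := by rw [Real.norm_eq_abs, abs_mul, abs_of_pos Real.two_pi_pos]

lemma hnorm_muState (θ : ℝ) : hnorm (muState θ) = 1 := by
  norm_num [hnorm, muState, Complex.normSq_eq_norm_sq, norm_exp_two_pi_I_mul]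

lemma hnorm_muState_sub (θ θ' : ℝ) : hnorm (muState θ - muState θ') =
    ‖Complex.exp (2 * π * Complex.I * θ) - Complex.exp (2 * π * Complex.I * θ')‖ / √2 := by
  simp [hnorm, muState, Complex.normSq_eq_norm_sq, ← sub_div, Real.sqrt_sq_eq_abs, abs_div,
    abs_of_nonneg (Real.sqrt_nonneg 2)]

lemma hnorm_muState_sub_le (θ θ' : ℝ) :
    hnorm (muState θ - muState θ') ≤ π * √2 * |θ - θ'| := by
  rw [hnorm_muState_sub, div_le_iff₀ (by positivity)]
  calc _ ≤ 2 * π * |θ - θ'| := norm_exp_two_pi_I_mul_sub_le θ θ'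
    _ = π * √2 * |θ - θ'| * √2 := by
      linear_combination (-(π * |θ - θ'|)) * Real.mul_self_sqrt zero_le_two

lemma hnorm_muProd_sub_update {n : ℕ} (θ : Fin n → ℝ) (j : Fin n) (t : ℝ) :
    hnorm (muProd θ - muProd (update θ j t)) = hnorm (muState (θ j) - muState t) := by
  rw [← hnorm_prod_update (fun i => muState (θ i)) (fun i => hnorm_muState _) j]
  congr 1
  funext y
  simp only [Pi.sub_apply, muProd, apply_update (fun i a => muState a (y i)), prod_sub_prod_update]
  exact prod_congr rfl fun i _ =>
    (apply_update (fun i (g : Bool → ℂ) => g (y i)) (fun i => muState (θ i)) j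
      (muState (θ j) - muState t) i).symm

lemma hnorm_muProd_sub_le {n : ℕ} (θ θ' : Fin n → ℝ) :
    hnorm (muProd θ - muProd θ') ≤ ∑ j, hnorm (muState (θ j) - muState (θ' j)) := by
  classical
  suffices h : ∀ s : Finset (Fin n), hnorm (muProd θ - muProd (s.piecewise θ' θ)) ≤
      ∑ j ∈ s, hnorm (muState (θ j) - muState (θ' j)) by
    simpa using h univ
  intro s
  induction s using Finset.induction_on with
  | empty => simp [hnorm]
  | insert a s ha ih =>
    rw [piecewise_insert, sum_insert ha]
    calc _ ≤ hnorm (muProd θ - muProd (s.piecewise θ' θ)) +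
          hnorm (muProd (s.piecewise θ' θ) - muProd (update (s.piecewise θ' θ) a (θ' a))) :=
          hnorm_sub_le_hnorm_sub_add_hnorm_sub _ _ _
      _ = hnorm (muProd θ - muProd (s.piecewise θ' θ)) +
          hnorm (muState (θ a) - muState (θ' a)) := by
          rw [hnorm_muProd_sub_update, piecewise_eq_of_notMem _ _ _ ha]
      _ ≤ _ := by linarith

lemma le_two_pow_clog_ceil (x : ℝ) : x ≤ 2 ^ Nat.clog 2 ⌈x⌉₊ :=
  calc x ≤ ⌈x⌉₊ := Nat.le_ceil x
    _ ≤ ((2 ^ Nat.clog 2 ⌈x⌉₊ : ℕ) : ℝ) := by exact_mod_cast Nat.le_pow_clog one_lt_two _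
    _ = 2 ^ Nat.clog 2 ⌈x⌉₊ := by push_cast; rfl

lemma pi_mul_sqrt_two_le : π * √2 ≤ 2 ^ 3 :=
  calc π * √2 ≤ 4 * 2 :=
        mul_le_mul Real.pi_le_four (Real.sqrt_le_iff.2 ⟨zero_le_two, by norm_num⟩)
          (Real.sqrt_nonneg 2) zero_le_four
    _ = 2 ^ 3 := by norm_num

/-- there is a constant (the `O(1)`) such that for every `n ≥ 1`, every
`ε > 0` and every basis state `|x⟩`, if `k = 2⌈log₂(n/ε)⌉ + O(1)` and each angle of the
exact QFT output `|ψ_x⟩ = ⊗_j |μ_{0.x_j…x_0}⟩` is truncated to `k` binary digits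
(so that it changes by at most `2^{−k}`), then `‖|ψ_x⟩ − |ψ̃_x⟩‖ ≤ ε`. -/
theorem truncated_qft_state_close :
    ∃ c : ℕ, ∀ (n k : ℕ), 1 ≤ n → ∀ ε : ℝ, 0 < ε →
      k ≥ 2 * Nat.clog 2 ⌈(n : ℝ) / ε⌉₊ + c →
      ∀ (x : Fin n → Bool) (θ' : Fin n → ℝ),
        (∀ j, |qftAngle x j - θ' j| ≤ (2 : ℝ) ^ (-(k : ℤ))) →
        hnorm (fun y => muProd (qftAngle x) y - muProd θ' y) ≤ ε := by
  refine ⟨3, fun n k _ ε hε hk x θ' hθ' => ?_⟩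
  set L := Nat.clog 2 ⌈(n : ℝ) / ε⌉₊
  have hn : (n : ℝ) ≤ ε * 2 ^ L := (div_le_iff₀' hε).1 (le_two_pow_clog_ceil _)
  have hk : (2 : ℝ) ^ L * 2 ^ 3 ≤ 2 ^ k := by
    rw [← pow_add]; exact pow_le_pow_right₀ one_le_two (by omega)
  calc hnorm (fun y => muProd (qftAngle x) y - muProd θ' y)
      ≤ ∑ j, hnorm (muState (qftAngle x j) - muState (θ' j)) := hnorm_muProd_sub_le _ _
    _ ≤ ∑ _j : Fin n, π * √2 * (2 : ℝ) ^ (-(k : ℤ)) :=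
        sum_le_sum fun j _ => (hnorm_muState_sub_le _ _).trans (by gcongr; exact hθ' j)
    _ = n * (π * √2) / 2 ^ k := by simp [zpow_neg, div_eq_mul_inv, mul_assoc]
    _ ≤ ε * 2 ^ L * 2 ^ 3 / 2 ^ k := by gcongr; exact pi_mul_sqrt_two_le
    _ ≤ ε := by rw [div_le_iff₀ (by positivity), mul_assoc]; gcongr
end
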